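/- arXiv:2209.05415 — 2 statements merged into one kernel-verified Lean document; each statement's English description precedes it below -/
import Mathlib

section
/- Let φ: ℝⁿ → [0,∞) be an anisotropy of class C¹ on ℝⁿ \ {0} which vanishes only at the origin and is strictly convex in the sense of Reshetnyak. Then for every r > 0, the restriction of the gradient map Dφ to the level set {p ∈ ℝⁿ : φ(p) = r} is injective. -/
open Set RealInnerProductSpace
noncomputable section

abbrev Eu (n : ℕ) := EuclideanSpace ℝ (Fin n)

/-- An anisotropy: a convex, nonnegative, positively 1-homogeneous function on ℝⁿ. -/
def IsAnisotropy {n : ℕ} (φ : Eu n → ℝ) : Prop :=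
  ConvexOn ℝ Set.univ φ ∧ (∀ p, 0 ≤ φ p) ∧
    ∀ t : ℝ, 0 ≤ t → ∀ p, φ (t • p) = t * φ p

/-! If `Dφ p = Dφ q`, the supporting hyperplane of `φ` at `p` and Euler's relation give
`φ (p + q) ≥ φ p + ⟪Dφ p, q⟫ = φ p + ⟪Dφ q, q⟫ = φ p + φ q`, while convexity and homogeneity
give the reverse inequality. Equality in the triangle inequality forces `q = t • p`
with `t ≥ 0` by Reshetnyak strict convexity, and `φ p = φ q > 0` forces `t = 1`. -/

lemma ConvexOn.map_add_le_of_homogeneous {V : Type*} [AddCommGroup V] [Module ℝ V] {φ : V → ℝ}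
    (hconv : ConvexOn ℝ univ φ)
    (hhom : ∀ t : ℝ, 0 ≤ t → ∀ p, φ (t • p) = t * φ p) (p q : V) :
    φ (p + q) ≤ φ p + φ q := by
  have hmid := hconv.2 (mem_univ p) (mem_univ q) (by norm_num : (0 : ℝ) ≤ 1 / 2)
    (by norm_num : (0 : ℝ) ≤ 1 / 2) (by norm_num)
  calc φ (p + q) = 2 * φ ((1 / 2 : ℝ) • p + (1 / 2 : ℝ) • q) := by
        rw [← hhom 2 zero_le_two]; congr 1; module
    _ ≤ φ p + φ q := by simp only [smul_eq_mul] at hmid; linarith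

section Gradient

variable {E : Type*} [NormedAddCommGroup E] [InnerProductSpace ℝ E] {φ : E → ℝ}

lemma DifferentiableAt.hasDerivAt_comp_add_smul [CompleteSpace E] {x : E}
    (hd : DifferentiableAt ℝ φ x) (v : E) :
    HasDerivAt (fun t : ℝ => φ (x + t • v)) ⟪gradient φ x, v⟫ 0 := by
  have hline : HasDerivAt (fun t : ℝ => x + t • v) v 0 := by
    simpa using ((hasDerivAt_id (0 : ℝ)).smul_const v).const_add x
  have hφ : HasFDerivAt φ (fderiv ℝ φ x) (x + (0 : ℝ) • v) := by
    simpa using hd.hasFDerivAt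
  have hcomp := hφ.comp_hasDerivAt (0 : ℝ) hline
  rw [← InnerProductSpace.toDual_symm_apply] at hcomp
  exact hcomp

lemma inner_gradient_self_of_homogeneous [CompleteSpace E]
    (hhom : ∀ t : ℝ, 0 ≤ t → ∀ p, φ (t • p) = t * φ p) {x : E} (hd : DifferentiableAt ℝ φ x) :
    ⟪gradient φ x, x⟫ = φ x := by
  have hray : (fun t : ℝ => φ (x + t • x)) =ᶠ[nhds 0] fun t => (1 + t) * φ x := by
    filter_upwards [eventually_gt_nhds (neg_one_lt_zero : (-1 : ℝ) < 0)] with t ht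
    rw [← hhom (1 + t) (by linarith) x, add_smul, one_smul]
  have hderiv : HasDerivAt (fun t : ℝ => (1 + t) * φ x) (φ x) 0 := by
    simpa using ((hasDerivAt_id (0 : ℝ)).const_add 1).mul_const (φ x)
  exact (hd.hasDerivAt_comp_add_smul x).unique (hderiv.congr_of_eventuallyEq hray)

lemma ConvexOn.add_inner_gradient_sub_le [CompleteSpace E] (hconv : ConvexOn ℝ univ φ) {x : E}
    (hd : DifferentiableAt ℝ φ x) (y : E) : φ x + ⟪gradient φ x, y - x⟫ ≤ φ y := by
  have hline : ConvexOn ℝ univ (fun t : ℝ => φ (x + t • (y - x))) := by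
    simpa [Function.comp_def, AffineMap.lineMap_apply_module', add_comm]
      using hconv.comp_affineMap (AffineMap.lineMap x y)
  have hslope := hline.le_slope_of_hasDerivAt (mem_univ 0) (mem_univ 1) one_pos
    (hd.hasDerivAt_comp_add_smul (y - x))
  simp only [slope_def_field, zero_smul, add_zero, one_smul, add_sub_cancel, sub_zero,
    div_one] at hslope
  linarith

lemma ConvexOn.map_add_eq_of_gradient_eq [CompleteSpace E] (hconv : ConvexOn ℝ univ φ)
    (hhom : ∀ t : ℝ, 0 ≤ t → ∀ p, φ (t • p) = t * φ p) {p q : E}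
    (hp : DifferentiableAt ℝ φ p) (hq : DifferentiableAt ℝ φ q)
    (hpq : gradient φ p = gradient φ q) : φ (p + q) = φ p + φ q := by
  refine le_antisymm (hconv.map_add_le_of_homogeneous hhom p q) ?_
  have hsupp := hconv.add_inner_gradient_sub_le hp (p + q)
  rwa [add_sub_cancel_left, hpq, inner_gradient_self_of_homogeneous hhom hq] at hsupp

end Gradient

theorem stmt13_general {n : ℕ} (φ : Eu n → ℝ) (hφ : IsAnisotropy φ)
    (hC1 : ContDiffOn ℝ 1 φ {(0 : Eu n)}ᶜ)
    (hres : ∀ p q : Eu n, φ (p + q) = φ p + φ q →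
      p = 0 ∨ ∃ t : ℝ, 0 ≤ t ∧ q = t • p) :
    ∀ r : ℝ, 0 < r → Set.InjOn (gradient φ) {p : Eu n | φ p = r} := by
  obtain ⟨hconv, -, hhom⟩ := hφ
  have hφ0 : φ 0 = 0 := by simpa using hhom 0 le_rfl 0
  intro r hr p (hp : φ p = r) q (hq : φ q = r) hpq
  have hne : ∀ {x : Eu n}, φ x = r → x ≠ 0 := by
    rintro x hx rfl
    exact hr.ne (hφ0 ▸ hx)
  have hdiff : ∀ {x : Eu n}, φ x = r → DifferentiableAt ℝ φ x := fun hx =>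
    (hC1.contDiffAt (isOpen_compl_singleton.mem_nhds (hne hx))).differentiableAt one_ne_zero
  have hsum := hconv.map_add_eq_of_gradient_eq hhom (hdiff hp) (hdiff hq) hpq
  obtain h0 | ⟨t, ht, rfl⟩ := hres p q hsum
  · exact absurd h0 (hne hp)
  · have ht1 : t * r = 1 * r := by rw [← hp, ← hhom t ht, hq, hp, one_mul]
    rw [mul_right_cancel₀ hr.ne' ht1, one_smul]

/-- **Lemma 2.15.** Let `φ : ℝⁿ → [0,∞)` be an anisotropy of class `C¹` on
`ℝⁿ \ {0}`, vanishing only at the origin and strictly convex in the sense of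
Reshetnyak. Then for every `r > 0` the gradient map `Dφ` restricted to the level
set `{p : φ(p) = r}` is injective. -/
theorem stmt13 {n : ℕ} (φ : Eu n → ℝ) (hφ : IsAnisotropy φ)
    (hC1 : ContDiffOn ℝ 1 φ {(0 : Eu n)}ᶜ)
    (hvan : ∀ p, φ p = 0 → p = 0)
    (hres : ∀ p q : Eu n, φ (p + q) = φ p + φ q →
      p = 0 ∨ ∃ t : ℝ, 0 ≤ t ∧ q = t • p) :
    ∀ r : ℝ, 0 < r → Set.InjOn (gradient φ) {p : Eu n | φ p = r} :=
  stmt13_general φ hφ hC1 hres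
end
end

section
/- Let f: [0,∞) → [0,∞) be strictly convex, increasing, differentiable with f'(0) = 0 and of linear growth, let f^∞ := lim_{t→∞} f'(t), and let φ: ℝⁿ → [0,∞) be a coercive anisotropy which is C¹ on ℝⁿ \ {0} and strictly convex in the sense of Reshetnyak. Set F = f ∘ φ. Then the map Ψ from the closed Euclidean unit ball of ℝⁿ to ℝⁿ defined by Ψ(q) = DF(q/(1−|q|)) for |q| < 1 and Ψ(q) = f^∞ Dφ(q) for |q| = 1 is continuous and injective; consequently (by compactness) it is a homeomorphism onto its image. (This is the extension of DF to the spherical compactification of ℝⁿ, identified with the closed unit ball via p ↦ p/(1+|p|).) -/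
open Set Filter Topology Metric RealInnerProductSpace
set_option maxHeartbeats 1000000
noncomputable section

section Helpers

/-- Algebraic slope identity. -/
lemma slope_ident (f : ℝ → ℝ) {s t : ℝ} (h : s ≠ t) :
    slope f s (2*s - t) = 2 * slope f t (2*s - t) - slope f t s := by
  have h1 : (2*s - t) - s = s - t := by ring
  have h2 : (2*s - t) - t = 2*(s - t) := by ring
  have hst : s - t ≠ 0 := sub_ne_zero.2 h
  simp only [slope_def_field]
  rw [h1, h2]
  field_simp
  ring

/-- The derivative of a convex function on `[0,∞)` is continuous on `[0,∞)`. -/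
lemma derivCont_of_convex {f f' : ℝ → ℝ} (hconv : ConvexOn ℝ (Ici 0) f)
    (hd : ∀ t ∈ Ici (0:ℝ), HasDerivWithinAt f (f' t) (Ici 0) t) :
    ContinuousOn f' (Ici 0) := by
  have hslope : ∀ t ∈ Ici (0:ℝ), Tendsto (slope f t) (𝓝[Ici 0 \ {t}] t) (𝓝 (f' t)) :=
    fun t ht => hasDerivWithinAt_iff_tendsto_slope.mp (hd t ht)
  -- right continuity
  have hright : ∀ t : ℝ, 0 ≤ t → Tendsto f' (𝓝[>] t) (𝓝 (f' t)) := by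
    intro t ht
    have hsub : Ioi t ⊆ Ici 0 \ {t} := fun s hs => ⟨le_trans ht (le_of_lt hs), ne_of_gt hs⟩
    have h1 : Tendsto (slope f t) (𝓝[>] t) (𝓝 (f' t)) :=
      (hslope t ht).mono_left (nhdsWithin_mono _ hsub)
    have hmap : Tendsto (fun s => 2*s - t) (𝓝[>] t) (𝓝[>] t) := by
      apply tendsto_nhdsWithin_of_tendsto_nhds_of_eventually_within
      · have : Tendsto (fun s : ℝ => 2*s - t) (𝓝 t) (𝓝 (2*t - t)) := by
          exact ((tendsto_const_nhds.mul tendsto_id).sub tendsto_const_nhds)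
        simpa [two_mul] using this.mono_left nhdsWithin_le_nhds
      · filter_upwards [self_mem_nhdsWithin] with s hs
        exact mem_Ioi.2 (by simp at hs; linarith)
    have h2 : Tendsto (fun s => 2 * slope f t (2*s - t) - slope f t s) (𝓝[>] t)
        (𝓝 (f' t)) := by
      have := ((h1.comp hmap).const_mul 2).sub h1
      simpa [two_mul] using this
    refine tendsto_of_tendsto_of_tendsto_of_le_of_le' h1 h2 ?_ ?_
    · filter_upwards [self_mem_nhdsWithin] with s hs
      exact hconv.slope_le_of_hasDerivWithinAt ht (le_trans ht (le_of_lt hs)) hs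
        (hd s (le_trans ht (le_of_lt hs)))
    · filter_upwards [self_mem_nhdsWithin] with s hs
      rw [← slope_ident f (ne_of_gt hs)]
      have hs0 : (0:ℝ) ≤ s := le_trans ht (le_of_lt hs)
      have h2s : (0:ℝ) ≤ 2*s - t := by simp at hs; linarith
      exact hconv.le_slope_of_hasDerivWithinAt hs0 h2s (by simp at hs ⊢; linarith) (hd s hs0)
  -- left continuity
  have hleft : ∀ t : ℝ, 0 < t → Tendsto f' (𝓝[<] t) (𝓝 (f' t)) := by
    intro t ht
    have hIoo : 𝓝[Iio t] t = 𝓝[Ioo 0 t] t := (nhdsWithin_Ioo_eq_nhdsLT ht).symm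
    have hsub : Ioo 0 t ⊆ Ici 0 \ {t} := fun s hs => ⟨le_of_lt hs.1, ne_of_lt hs.2⟩
    have h1 : Tendsto (slope f t) (𝓝[<] t) (𝓝 (f' t)) := by
      rw [hIoo]; exact (hslope t (le_of_lt ht)).mono_left (nhdsWithin_mono _ hsub)
    have hmap : Tendsto (fun s => 2*s - t) (𝓝[<] t) (𝓝[<] t) := by
      apply tendsto_nhdsWithin_of_tendsto_nhds_of_eventually_within
      · have : Tendsto (fun s : ℝ => 2*s - t) (𝓝 t) (𝓝 (2*t - t)) :=
          ((tendsto_const_nhds.mul tendsto_id).sub tendsto_const_nhds)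
        simpa [two_mul] using this.mono_left nhdsWithin_le_nhds
      · filter_upwards [self_mem_nhdsWithin] with s hs
        exact mem_Iio.2 (by simp at hs; linarith)
    have h2 : Tendsto (fun s => 2 * slope f t (2*s - t) - slope f t s) (𝓝[<] t)
        (𝓝 (f' t)) := by
      have := ((h1.comp hmap).const_mul 2).sub h1
      simpa [two_mul] using this
    have hhalf : ∀ᶠ s in 𝓝[<] t, t/2 < s := by
      apply eventually_nhdsWithin_of_eventually_nhds
      exact eventually_gt_nhds (by linarith)
    refine tendsto_of_tendsto_of_tendsto_of_le_of_le' h2 h1 ?_ ?_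
    · filter_upwards [self_mem_nhdsWithin, hhalf] with s hs hs2
      have key : 2 * slope f t (2*s - t) - slope f t s = slope f (2*s - t) s := by
        rw [slope_comm f (2*s - t) s]; exact (slope_ident f (ne_of_lt hs)).symm
      rw [key]
      have hs0 : (0:ℝ) ≤ s := by simp at hs; linarith
      have h2s : (0:ℝ) ≤ 2*s - t := by linarith
      exact hconv.slope_le_of_hasDerivWithinAt h2s hs0 (by simp at hs; linarith) (hd s hs0)
    · filter_upwards [self_mem_nhdsWithin, hhalf] with s hs hs2
      rw [slope_comm]
      have hs0 : (0:ℝ) ≤ s := by linarith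
      exact hconv.le_slope_of_hasDerivWithinAt hs0 ht.le (by simpa using hs) (hd s hs0)
  intro t ht
  rcases eq_or_lt_of_le (mem_Ici.mp ht) with h0 | h0
  · have hA : ContinuousWithinAt f' (Ioi t) t := hright t ht
    have hB : ContinuousWithinAt f' {t} t := continuousWithinAt_singleton
    refine (hA.union hB).mono ?_
    intro x hx
    have hx' : t ≤ x := h0 ▸ (mem_Ici.mp hx)
    rcases eq_or_lt_of_le hx' with h | h
    · exact Or.inr (by simp [← h])
    · exact Or.inl h
  · have hA : ContinuousWithinAt f' (Ioi t) t := hright t (le_of_lt h0)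
    have hB : ContinuousWithinAt f' {t} t := continuousWithinAt_singleton
    have hC : ContinuousWithinAt f' (Iio t) t := hleft t h0
    refine ((hA.union hB).union hC).mono ?_
    intro x _
    rcases lt_trichotomy x t with h | h | h
    · exact Or.inr h
    · exact Or.inl (Or.inr (by simp [h]))
    · exact Or.inl (Or.inl h)

variable {n : ℕ}

lemma aniso_zero (φ : Eu n → ℝ) (hφ : IsAnisotropy φ) : φ 0 = 0 := by
  simpa using hφ.2.2 0 le_rfl 0

lemma aniso_subadd (φ : Eu n → ℝ) (hφ : IsAnisotropy φ) (p q : Eu n) :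
    φ (p + q) ≤ φ p + φ q := by
  have h := hφ.1.2 (mem_univ p) (mem_univ q) (by norm_num : (0:ℝ) ≤ 1/2)
    (by norm_num : (0:ℝ) ≤ 1/2) (by norm_num)
  have h2 : (1/2 : ℝ) • p + (1/2 : ℝ) • q = (1/2 : ℝ) • (p + q) := by
    rw [smul_add]
  rw [h2, hφ.2.2 (1/2) (by norm_num) (p+q)] at h
  simp only [smul_eq_mul] at h
  linarith
lemma aniso_cont (φ : Eu n → ℝ) (hφ : IsAnisotropy φ) : Continuous φ := by
  rw [← continuousOn_univ]
  exact hφ.1.continuousOn isOpen_univ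

lemma aniso_bound (φ : Eu n → ℝ) (hφ : IsAnisotropy φ) :
    ∃ M : ℝ, 0 < M ∧ ∀ p, φ p ≤ M * ‖p‖ := by
  by_cases hn : (Metric.sphere (0 : Eu n) 1).Nonempty
  · obtain ⟨x₀, -, hx₀'⟩ := (isCompact_sphere (0 : Eu n) 1).exists_isMaxOn hn
      ((aniso_cont φ hφ).continuousOn)
    have hx₀ : ∀ y ∈ Metric.sphere (0 : Eu n) 1, φ y ≤ φ x₀ := fun y hy => hx₀' hy
    refine ⟨max (φ x₀) 1, lt_max_of_lt_right one_pos, fun p => ?_⟩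
    rcases eq_or_ne p 0 with rfl | hp
    · simp [aniso_zero φ hφ]
    · have hnp : (0:ℝ) < ‖p‖ := norm_pos_iff.2 hp
      have hmem : ‖p‖⁻¹ • p ∈ Metric.sphere (0 : Eu n) 1 := by
        simp [norm_smul, abs_of_nonneg (inv_nonneg.2 hnp.le), inv_mul_cancel₀ hnp.ne']
      have h1 : φ p = ‖p‖ * φ (‖p‖⁻¹ • p) := by
        rw [← hφ.2.2 ‖p‖ hnp.le, smul_smul, mul_inv_cancel₀ hnp.ne', one_smul]
      rw [h1]
      have := hx₀ _ hmem
      calc ‖p‖ * φ (‖p‖⁻¹ • p) ≤ ‖p‖ * φ x₀ := by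
            exact mul_le_mul_of_nonneg_left this hnp.le
        _ ≤ max (φ x₀) 1 * ‖p‖ := by rw [mul_comm]; gcongr; exact le_max_left _ _
  · refine ⟨1, one_pos, fun p => ?_⟩
    rcases eq_or_ne p 0 with rfl | hp
    · simp [aniso_zero φ hφ]
    · exfalso
      have hnp : (0:ℝ) < ‖p‖ := norm_pos_iff.2 hp
      refine hn ⟨‖p‖⁻¹ • p, ?_⟩
      simp [norm_smul, abs_of_nonneg (inv_nonneg.2 hnp.le), inv_mul_cancel₀ hnp.ne']

lemma aniso_euler (φ : Eu n → ℝ) (hφ : IsAnisotropy φ) {p : Eu n} (hp : p ≠ 0)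
    (hdiff : DifferentiableAt ℝ φ p) : fderiv ℝ φ p p = φ p := by
  have hg : HasDerivAt (fun t : ℝ => t • p) p 1 := by
    simpa using (hasDerivAt_id (1:ℝ)).smul_const p
  have hφat : HasFDerivAt φ (fderiv ℝ φ p) ((fun t : ℝ => t • p) 1) := by
    simpa using hdiff.hasFDerivAt
  have h1 : HasDerivAt (fun t : ℝ => φ (t • p)) (fderiv ℝ φ p p) 1 :=
    hφat.comp_hasDerivAt 1 hg
  have heq : (fun t : ℝ => t * φ p) =ᶠ[𝓝 (1:ℝ)] (fun t : ℝ => φ (t • p)) := by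
    filter_upwards [eventually_gt_nhds (zero_lt_one)] with t ht
    exact (hφ.2.2 t ht.le p).symm
  have h1' : HasDerivAt (fun t : ℝ => t * φ p) (fderiv ℝ φ p p) 1 :=
    h1.congr_of_eventuallyEq heq
  have h2 : HasDerivAt (fun t : ℝ => t * φ p) (φ p) 1 := by
    simpa using (hasDerivAt_id (1:ℝ)).mul_const (φ p)
  exact (h1'.unique h2)

lemma aniso_subgrad (φ : Eu n → ℝ) (hφ : IsAnisotropy φ) {p : Eu n} (hp : p ≠ 0)
    (hdiff : DifferentiableAt ℝ φ p) (y : Eu n) : fderiv ℝ φ p y ≤ φ y := by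
  set g : ℝ → ℝ := fun s => φ (p + s • (y - p)) with hgdef
  have hgconv : ConvexOn ℝ univ g := by
    have h1 : g = φ ∘ (AffineMap.lineMap p y) := by
      funext s
      simp [hgdef, AffineMap.lineMap_apply, add_comm]
    have := hφ.1.comp_affineMap (AffineMap.lineMap p y)
    rw [← h1] at this
    simpa using this
  have hb : HasDerivAt (fun s : ℝ => p + s • (y - p)) (y - p) 0 := by
    simpa using ((hasDerivAt_id (0:ℝ)).smul_const (y - p)).const_add p
  have hφat : HasFDerivAt φ (fderiv ℝ φ p) ((fun s : ℝ => p + s • (y - p)) 0) := by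
    simpa using hdiff.hasFDerivAt
  have hder : HasDerivAt g (fderiv ℝ φ p (y - p)) 0 := hφat.comp_hasDerivAt 0 hb
  have hle : fderiv ℝ φ p (y - p) ≤ slope g 0 1 :=
    hgconv.le_slope_of_hasDerivAt (mem_univ 0) (mem_univ 1) one_pos hder
  have hslope : slope g 0 1 = φ y - φ p := by
    simp [slope_def_field, hgdef]
  rw [hslope] at hle
  have hy : fderiv ℝ φ p y = fderiv ℝ φ p (y - p) + fderiv ℝ φ p p := by
    rw [← map_add]; congr 1; abel
  rw [hy, aniso_euler φ hφ hp hdiff]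
  linarith

lemma aniso_fderiv_homog (φ : Eu n → ℝ) (hφ : IsAnisotropy φ)
    (hdiff : ∀ p : Eu n, p ≠ 0 → DifferentiableAt ℝ φ p)
    {t : ℝ} (ht : 0 < t) {p : Eu n} (hp : p ≠ 0) :
    fderiv ℝ φ (t • p) = fderiv ℝ φ p := by
  have htp : t • p ≠ 0 := smul_ne_zero (ne_of_gt ht) hp
  set L : Eu n →L[ℝ] Eu n := t • ContinuousLinearMap.id ℝ (Eu n) with hLdef
  have hA : HasFDerivAt φ (fderiv ℝ φ (t • p)) (L p) := by
    simpa [hLdef] using (hdiff _ htp).hasFDerivAt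
  have h1 : HasFDerivAt (φ ∘ L) ((fderiv ℝ φ (t • p)).comp L) p :=
    hA.comp p L.hasFDerivAt
  have h2 : (φ ∘ L) = fun x => t * φ x := by
    funext x
    simp [hLdef, hφ.2.2 t ht.le]
  rw [h2] at h1
  have h3 : HasFDerivAt (fun x => t * φ x) (t • fderiv ℝ φ p) p :=
    (hdiff p hp).hasFDerivAt.const_mul t
  have h4 := h1.unique h3
  ext v
  have := DFunLike.congr_fun h4 v
  simp [hLdef] at this
  have h5 : t * (fderiv ℝ φ (t • p)) v = t * (fderiv ℝ φ p) v := by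
    simpa [mul_comm] using this
  exact mul_left_cancel₀ (ne_of_gt ht) h5

end Helpers

/-- **Lemma 2.17.** Let `F = f ∘ φ`, with `f : [0,∞) → [0,∞)` strictly convex,
increasing, differentiable with `f'(0) = 0`, of linear growth with
`f^∞ = lim_{t→∞} f'(t)`, and `φ` a coercive anisotropy, `C¹` away from the origin
and strictly convex in the sense of Reshetnyak. Then the extension of `DF` to the
spherical compactification of `ℝⁿ` — identified with the closed unit ball via
`p ↦ p/(1+|p|)`, i.e. the map `Ψ(q) = DF(q/(1−|q|))` for `|q| < 1` and
`Ψ(q) = f^∞ Dφ(q)` for `|q| = 1` — is continuous and injective on the closed unit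
ball, hence (by compactness) a homeomorphism onto its image. -/
theorem stmt15 {n : ℕ} (φ : Eu n → ℝ) (hφ : IsAnisotropy φ)
    (c : ℝ) (hc : 0 < c) (hcoer : ∀ p, c * ‖p‖ ≤ φ p)
    (hφC1 : ContDiffOn ℝ 1 φ {(0 : Eu n)}ᶜ)
    (hres : ∀ p q : Eu n, φ (p + q) = φ p + φ q →
      p = 0 ∨ ∃ t : ℝ, 0 ≤ t ∧ q = t • p)
    -- `f`: strictly convex, increasing, differentiable with `f'(0) = 0`,
    -- nonnegative, of linear growth, with recession constant `f^∞`
    (f f' : ℝ → ℝ) (hfconv : StrictConvexOn ℝ (Ici 0) f)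
    (hfmono : StrictMonoOn f (Ici 0)) (hfnn : ∀ t ∈ Ici (0 : ℝ), 0 ≤ f t)
    (hfderiv : ∀ t ∈ Ici (0 : ℝ), HasDerivWithinAt f (f' t) (Ici 0) t)
    (hf'0 : f' 0 = 0)
    (Cp Bp Cm Bm : ℝ) (hCp : 0 < Cp) (hCm : 0 < Cm)
    (hgrowth : ∀ t ∈ Ici (0 : ℝ), Cm * t + Bm ≤ f t ∧ f t ≤ Cp * t + Bp)
    (finf : ℝ) (hfinf : Tendsto f' atTop (𝓝 finf))
    -- the extended gradient map `Ψ` on the closed unit ball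
    (Ψ : Eu n → Eu n)
    (hΨlt : ∀ q : Eu n, ‖q‖ < 1 →
      Ψ q = gradient (fun p => f (φ p)) ((1 - ‖q‖)⁻¹ • q))
    (hΨeq : ∀ q : Eu n, ‖q‖ = 1 → Ψ q = finf • gradient φ q) :
    ContinuousOn Ψ (closedBall (0 : Eu n) 1) ∧
    Set.InjOn Ψ (closedBall (0 : Eu n) 1) ∧
    ∃ e : (closedBall (0 : Eu n) 1) ≃ₜ (Ψ '' closedBall (0 : Eu n) 1),
      ∀ q : closedBall (0 : Eu n) 1, (e q : Eu n) = Ψ (q : Eu n) := by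
  classical
  set F : Eu n → ℝ := fun p => f (φ p) with hFdef
  obtain ⟨M, hM0, hMle⟩ := aniso_bound φ hφ
  have hφ0 : φ 0 = 0 := aniso_zero φ hφ
  have hφcont : Continuous φ := aniso_cont φ hφ
  have hφnn : ∀ p, 0 ≤ φ p := hφ.2.1
  have hφpos : ∀ p : Eu n, p ≠ 0 → 0 < φ p := fun p hp =>
    lt_of_lt_of_le (mul_pos hc (norm_pos_iff.2 hp)) (hcoer p)
  have hφnn' : ∀ p : Eu n, φ p ∈ Ici (0:ℝ) := fun p => mem_Ici.2 (hφnn p)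
  have hdiff : ∀ p : Eu n, p ≠ 0 → DifferentiableAt ℝ φ p := fun p hp =>
    (hφC1.contDiffAt (isOpen_compl_singleton.mem_nhds hp)).differentiableAt one_ne_zero
  have hinner : ∀ (g : Eu n → ℝ) (z v : Eu n), ⟪gradient g z, v⟫ = fderiv ℝ g z v :=
    fun g z v => InnerProductSpace.toDual_symm_apply
  have hΦeuler : ∀ p : Eu n, p ≠ 0 → ⟪gradient φ p, p⟫ = φ p := by
    intro p hp; rw [hinner]; exact aniso_euler φ hφ hp (hdiff p hp)
  have hΦsub : ∀ p : Eu n, p ≠ 0 → ∀ y, ⟪gradient φ p, y⟫ ≤ φ y := by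
    intro p hp y; rw [hinner]; exact aniso_subgrad φ hφ hp (hdiff p hp) y
  have hΦhom : ∀ t : ℝ, 0 < t → ∀ p : Eu n, p ≠ 0 →
      gradient φ (t • p) = gradient φ p := by
    intro t ht p hp
    show (InnerProductSpace.toDual ℝ (Eu n)).symm (fderiv ℝ φ (t • p)) = _
    rw [aniso_fderiv_homog φ hφ hdiff ht hp]; rfl
  have hΦcont : ContinuousOn (gradient φ) {(0:Eu n)}ᶜ := by
    have h1 : ContinuousOn (fderiv ℝ φ) {(0:Eu n)}ᶜ :=
      hφC1.continuousOn_fderiv_of_isOpen isOpen_compl_singleton le_rfl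
    exact (InnerProductSpace.toDual ℝ (Eu n)).symm.continuous.comp_continuousOn h1
  have hΦnorm : ∀ p : Eu n, p ≠ 0 → ‖gradient φ p‖ ≤ M := by
    intro p hp
    rcases eq_or_ne (gradient φ p) 0 with h | h
    · rw [h]; simpa using hM0.le
    · have h1 : ‖gradient φ p‖ * ‖gradient φ p‖ ≤ M * ‖gradient φ p‖ := by
        calc ‖gradient φ p‖ * ‖gradient φ p‖ = ⟪gradient φ p, gradient φ p⟫ :=
              (real_inner_self_eq_norm_mul_norm _).symm
          _ ≤ φ (gradient φ p) := hΦsub p hp _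
          _ ≤ M * ‖gradient φ p‖ := hMle _
      exact le_of_mul_le_mul_right h1 (norm_pos_iff.2 h)
  -- facts about f'
  have hf'mono : ∀ x ∈ Ici (0:ℝ), ∀ y ∈ Ici (0:ℝ), x < y → f' x < f' y := by
    intro x hx y hy hxy
    calc f' x < slope f x y := hfconv.lt_slope_of_hasDerivWithinAt hx hy hxy (hfderiv x hx)
      _ < f' y := hfconv.slope_lt_of_hasDerivWithinAt hx hy hxy (hfderiv y hy)
  have hf'nn : ∀ t ∈ Ici (0:ℝ), 0 ≤ f' t := by
    intro t ht
    rcases eq_or_lt_of_le (mem_Ici.mp ht) with h | h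
    · rw [← h, hf'0]
    · rw [← hf'0]; exact (hf'mono 0 self_mem_Ici t ht h).le
  have hf'le : ∀ x ∈ Ici (0:ℝ), ∀ y ∈ Ici (0:ℝ), x ≤ y → f' x ≤ f' y := by
    intro x hx y hy hxy
    rcases eq_or_lt_of_le hxy with h | h
    · rw [h]
    · exact (hf'mono x hx y hy h).le
  have hf'lt : ∀ t ∈ Ici (0:ℝ), f' t < finf := by
    intro t ht
    have ht' : (0:ℝ) ≤ t := ht
    have h1 : f' (t+1) ≤ finf := by
      refine ge_of_tendsto hfinf ?_
      filter_upwards [eventually_ge_atTop (t+1)] with s hs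
      exact hf'le (t+1) (mem_Ici.2 (by linarith)) s (mem_Ici.2 (by linarith)) hs
    have h2 : f' t < f' (t+1) := hf'mono t ht (t+1) (mem_Ici.2 (by linarith)) (by linarith)
    linarith
  have hfinfpos : 0 < finf := by
    have := hf'lt 0 self_mem_Ici; rwa [hf'0] at this
  have hf'cont : ContinuousOn f' (Ici 0) := derivCont_of_convex hfconv.convexOn hfderiv
  -- the gradient map of F
  set G : Eu n → Eu n := fun p => f' (φ p) • gradient φ p with hGdef
  have hFdp : ∀ p : Eu n, p ≠ 0 → HasFDerivAt F (f' (φ p) • fderiv ℝ φ p) p := by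
    intro p hp
    have h1 : HasDerivAt f (f' (φ p)) (φ p) :=
      (hfderiv _ (hφnn' p)).hasDerivAt (Ici_mem_nhds (hφpos p hp))
    exact h1.comp_hasFDerivAt p (hdiff p hp).hasFDerivAt
  have hFd0 : HasFDerivAt F (0 : Eu n →L[ℝ] ℝ) 0 := by
    rw [hasFDerivAt_iff_tendsto]
    have hbound : ∀ p : Eu n, ‖p - 0‖⁻¹ * ‖F p - F 0 - (0 : Eu n →L[ℝ] ℝ) (p - 0)‖
        ≤ M * f' (M * ‖p‖) := by
      intro p
      rcases eq_or_ne p 0 with rfl | hp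
      · simp [hf'0]
      · have hnp : (0:ℝ) < ‖p‖ := norm_pos_iff.2 hp
        have hp0 : 0 < φ p := hφpos p hp
        have hmem : φ p ∈ Ici (0:ℝ) := hφnn' p
        have hF0 : F 0 = f 0 := by rw [hFdef]; simp [hφ0]
        have hmono0 : f 0 ≤ f (φ p) :=
          hfmono.monotoneOn self_mem_Ici hmem (hφnn p)
        have hslope : (f (φ p) - f 0) ≤ f' (φ p) * φ p := by
          have := hfconv.convexOn.slope_le_of_hasDerivWithinAt self_mem_Ici hmem hp0
            (hfderiv _ hmem)
          rw [slope_def_field] at this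
          have h2 : f (φ p) - f 0 = (f (φ p) - f 0) / (φ p - 0) * φ p := by
            rw [sub_zero, div_mul_cancel₀ _ hp0.ne']
          rw [h2]
          exact mul_le_mul_of_nonneg_right this hp0.le
        have hMp : φ p ≤ M * ‖p‖ := hMle p
        have hMp0 : (0:ℝ) ≤ M * ‖p‖ := le_trans (hφnn p) hMp
        have hmm : f' (φ p) * φ p ≤ f' (M * ‖p‖) * (M * ‖p‖) := by
          have h4 : f' (φ p) ≤ f' (M * ‖p‖) :=
            hf'le _ hmem _ (mem_Ici.2 hMp0) hMp
          exact mul_le_mul h4 hMp hp0.le (hf'nn _ (mem_Ici.2 hMp0))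
        rw [hF0]
        simp only [sub_zero, ContinuousLinearMap.zero_apply, sub_zero]
        rw [Real.norm_eq_abs, abs_of_nonneg (by linarith : (0:ℝ) ≤ F p - f 0)]
        rw [inv_mul_le_iff₀ hnp]
        calc F p - f 0 ≤ f' (M * ‖p‖) * (M * ‖p‖) := le_trans hslope hmm
          _ = ‖p‖ * (M * f' (M * ‖p‖)) := by ring
    refine squeeze_zero (fun p => by positivity) hbound ?_
    have h5 : Tendsto (fun p : Eu n => M * ‖p‖) (𝓝 0) (𝓝[Ici 0] 0) := by
      rw [tendsto_nhdsWithin_iff]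
      refine ⟨by simpa using (Continuous.tendsto (f := fun p : Eu n => M * ‖p‖) (continuous_const.mul continuous_norm) (0:Eu n)), ?_⟩
      filter_upwards with p using mul_nonneg hM0.le (norm_nonneg p)
    have h7 : Tendsto (fun p : Eu n => M * f' (M * ‖p‖)) (𝓝 0) (𝓝 (M * f' 0)) :=
      ((hf'cont 0 self_mem_Ici).tendsto.comp h5).const_mul M
    simpa [hf'0] using h7
  have hFd : ∀ p : Eu n, HasFDerivAt F (f' (φ p) • fderiv ℝ φ p) p := by
    intro p
    rcases eq_or_ne p 0 with rfl | hp
    · have : f' (φ (0:Eu n)) • fderiv ℝ φ 0 = 0 := by rw [hφ0, hf'0, zero_smul]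
      rw [this]; exact hFd0
    · exact hFdp p hp
  have hgradF : ∀ p : Eu n, gradient F p = G p := by
    intro p
    show (InnerProductSpace.toDual ℝ (Eu n)).symm (fderiv ℝ F p) = G p
    rw [(hFd p).fderiv, map_smul, hGdef]
    rfl
  have hG0 : G 0 = 0 := by rw [hGdef]; simp [hφ0, hf'0]
  -- continuity of G
  have hGcont : Continuous G := by
    rw [continuous_iff_continuousAt]
    intro p
    rcases eq_or_ne p 0 with rfl | hp
    · have hb : ∀ q : Eu n, ‖G q‖ ≤ M * f' (M * ‖q‖) := by
        intro q
        rcases eq_or_ne q 0 with rfl | hq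
        · rw [hG0]; simp [hf'0]
        · rw [hGdef]
          simp only
          rw [norm_smul, Real.norm_eq_abs, abs_of_nonneg (hf'nn _ (hφnn' q))]
          have hMq0 : (0:ℝ) ≤ M * ‖q‖ := le_trans (hφnn q) (hMle q)
          calc f' (φ q) * ‖gradient φ q‖ ≤ f' (M * ‖q‖) * M := by
                apply mul_le_mul
                · exact hf'le _ (hφnn' q) _ (mem_Ici.2 hMq0) (hMle q)
                · exact hΦnorm q hq
                · exact norm_nonneg _
                · exact hf'nn _ (mem_Ici.2 hMq0)
            _ = M * f' (M * ‖q‖) := mul_comm _ _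
      have h5 : Tendsto (fun q : Eu n => M * ‖q‖) (𝓝 0) (𝓝[Ici 0] 0) := by
        rw [tendsto_nhdsWithin_iff]
        refine ⟨by simpa using (Continuous.tendsto (f := fun q : Eu n => M * ‖q‖) (continuous_const.mul continuous_norm) (0:Eu n)), ?_⟩
        filter_upwards with q using mul_nonneg hM0.le (norm_nonneg q)
      have h7 : Tendsto (fun q : Eu n => M * f' (M * ‖q‖)) (𝓝 0) (𝓝 (M * f' 0)) :=
        ((hf'cont 0 self_mem_Ici).tendsto.comp h5).const_mul M
      have h8 : Tendsto G (𝓝 0) (𝓝 0) := by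
        refine squeeze_zero_norm hb ?_
        simpa [hf'0] using h7
      rw [ContinuousAt, hG0]; exact h8
    · have hco : ContinuousOn G {(0:Eu n)}ᶜ := by
        rw [hGdef]
        refine ContinuousOn.smul (f := fun p => f' (φ p)) ?_ hΦcont
        exact hf'cont.comp hφcont.continuousOn (fun q _ => hφnn' q)
      exact hco.continuousAt (isOpen_compl_singleton.mem_nhds hp)
  -- strict convexity of F
  have hFstrict : ∀ x y : Eu n, x ≠ y → ∀ a b : ℝ, 0 < a → 0 < b → a + b = 1 →
      F (a • x + b • y) < a * F x + b * F y := by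
    intro x y hxy a b ha hb hab
    have hzc : φ (a • x + b • y) ≤ a * φ x + b * φ y := by
      have := hφ.1.2 (mem_univ x) (mem_univ y) ha.le hb.le hab
      simpa [smul_eq_mul] using this
    have hmemx : φ x ∈ Ici (0:ℝ) := hφnn' x
    have hmemy : φ y ∈ Ici (0:ℝ) := hφnn' y
    have hmemz : φ (a • x + b • y) ∈ Ici (0:ℝ) := hφnn' _
    have hmemc : a * φ x + b * φ y ∈ Ici (0:ℝ) := mem_Ici.2
      (add_nonneg (mul_nonneg ha.le (hφnn x)) (mul_nonneg hb.le (hφnn y)))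
    by_cases hne : φ x = φ y
    · have hcomb : a * φ x + b * φ y = φ x := by
        rw [← hne]; linear_combination (φ x) * hab
      rcases eq_or_lt_of_le hzc with heq | hlt
      · exfalso
        have heq2 : φ (a • x + b • y) = φ (a • x) + φ (b • y) := by
          rw [hφ.2.2 a ha.le, hφ.2.2 b hb.le, heq]
        rcases hres _ _ heq2 with h0 | ⟨t, ht0, hq⟩
        · have hx0 : x = 0 := by
            rcases smul_eq_zero.mp h0 with h | h
            · exact absurd h ha.ne'
            · exact h
          have hy0 : φ y = 0 := by rw [← hne, hx0, hφ0]
          have hyy : y = 0 := by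
            by_contra hy
            exact absurd hy0 (ne_of_gt (hφpos y hy))
          exact hxy (by rw [hx0, hyy])
        · have hyx : y = (b⁻¹ * (t * a)) • x := by
            have h1 : b • y = (t * a) • x := by rw [hq, smul_smul]
            have h2 : y = b⁻¹ • ((t*a) • x) := by
              rw [← h1, smul_smul, inv_mul_cancel₀ hb.ne', one_smul]
            rw [h2, smul_smul]
          set r := b⁻¹ * (t * a) with hrdef
          have hr0 : 0 ≤ r := by positivity
          have hφyr : φ y = r * φ x := by rw [hyx, hφ.2.2 r hr0]
          rcases eq_or_lt_of_le (hφnn x) with hx0 | hx0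
          · have hxx : x = 0 := by
              by_contra hx
              exact absurd hx0.symm (ne_of_gt (hφpos x hx))
            have hyy : y = 0 := by rw [hyx, hxx, smul_zero]
            exact hxy (by rw [hxx, hyy])
          · have hr1 : r = 1 := by
              have h9 : r * φ x = 1 * φ x := by
                rw [one_mul]
                have h10 : φ x = r * φ x := hne.trans hφyr
                linarith
              exact mul_right_cancel₀ (ne_of_gt hx0) h9
            have hyy : y = x := by rw [hyx, hr1, one_smul]
            exact hxy hyy.symm
      · calc F (a • x + b • y) = f (φ (a • x + b • y)) := rfl
          _ < f (φ x) := hfmono hmemz hmemx (by rw [← hcomb]; exact hlt)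
          _ = a * F x + b * F y := by
            show f (φ x) = a * f (φ x) + b * f (φ y)
            rw [← hne]; linear_combination (-(f (φ x))) * hab
    · have h1 : f (a * φ x + b * φ y) < a * f (φ x) + b * f (φ y) := by
        have := hfconv.2 hmemx hmemy hne ha hb hab
        simpa [smul_eq_mul] using this
      have h2 : f (φ (a • x + b • y)) ≤ f (a * φ x + b * φ y) :=
        hfmono.monotoneOn hmemz hmemc hzc
      exact lt_of_le_of_lt h2 h1
  -- strict monotonicity and injectivity of G
  have hmonoG : ∀ x y : Eu n, x ≠ y → ⟪G x, y - x⟫ < ⟪G y, y - x⟫ := by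
    intro x y hxy
    have hv : y - x ≠ 0 := sub_ne_zero.2 (Ne.symm hxy)
    set g : ℝ → ℝ := fun s => F (x + s • (y - x)) with hgdef
    have hgsc : StrictConvexOn ℝ univ g := by
      refine ⟨convex_univ, fun s _ u _ hsu a b ha hb hab => ?_⟩
      have hkey : x + (a*s + b*u) • (y-x) = a • (x + s • (y-x)) + b • (x + u • (y-x)) := by
        have hx : a • x + b • x = x := by rw [← add_smul, hab, one_smul]
        have h1 : a • (x + s • (y-x)) + b • (x + u • (y-x))
            = (a • x + b • x) + ((a*s) • (y-x) + (b*u) • (y-x)) := by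
          rw [smul_add, smul_add, mul_smul, mul_smul]; abel
        rw [h1, hx, add_smul]
      have hne2 : x + s • (y-x) ≠ x + u • (y-x) := by
        intro h
        apply hsu
        have := add_left_cancel h
        have h2 : (s - u) • (y - x) = 0 := by rw [sub_smul, this, sub_self]
        rcases smul_eq_zero.mp h2 with h3 | h3
        · linarith [sub_eq_zero.mp h3]
        · exact absurd h3 hv
      calc g (a • s + b • u) = F (x + (a*s + b*u) • (y-x)) := by
            simp only [hgdef, smul_eq_mul]
        _ = F (a • (x + s • (y-x)) + b • (x + u • (y-x))) := by rw [hkey]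
        _ < a * F (x + s • (y-x)) + b * F (x + u • (y-x)) :=
            hFstrict _ _ hne2 a b ha hb hab
        _ = a • g s + b • g u := by simp only [hgdef, smul_eq_mul]
    have hd : ∀ s : ℝ, HasDerivAt g (⟪G (x + s • (y-x)), y - x⟫) s := by
      intro s
      have hb : HasDerivAt (fun s : ℝ => x + s • (y - x)) (y - x) s := by
        simpa using ((hasDerivAt_id s).smul_const (y - x)).const_add x
      have hφat : HasFDerivAt F (f' (φ (x + s • (y-x))) • fderiv ℝ φ (x + s • (y-x)))
          ((fun s : ℝ => x + s • (y - x)) s) := hFd _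
      have := hφat.comp_hasDerivAt s hb
      have hval : (f' (φ (x + s • (y-x))) • fderiv ℝ φ (x + s • (y-x))) (y - x)
          = ⟪G (x + s • (y-x)), y - x⟫ := by
        rw [← hgradF, ← (hFd _).fderiv, hinner]
      rw [← hval]
      exact this
    have h0 : HasDerivAt g (⟪G x, y - x⟫) 0 := by
      have := hd 0
      simpa using this
    have h1 : HasDerivAt g (⟪G y, y - x⟫) 1 := by
      have := hd 1
      have he : x + (1:ℝ) • (y - x) = y := by rw [one_smul]; abel
      rwa [he] at this
    calc ⟪G x, y - x⟫ < slope g 0 1 :=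
          hgsc.lt_slope_of_hasDerivAt (mem_univ 0) (mem_univ 1) one_pos h0
      _ < ⟪G y, y - x⟫ :=
          hgsc.slope_lt_of_hasDerivAt (mem_univ 0) (mem_univ 1) one_pos h1
  have hGinj : Function.Injective G := by
    intro x y hxy
    by_contra hne
    have h1 := hmonoG x y hne
    rw [hxy] at h1
    exact lt_irrefl _ h1
  -- the scaling map ρ
  have hρinj : ∀ a b : Eu n, ‖a‖ < 1 → ‖b‖ < 1 →
      (1 - ‖a‖)⁻¹ • a = (1 - ‖b‖)⁻¹ • b → a = b := by
    intro a b ha hb h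
    have h1a : (0:ℝ) < 1 - ‖a‖ := by linarith
    have h1b : (0:ℝ) < 1 - ‖b‖ := by linarith
    have hn : (1 - ‖a‖)⁻¹ * ‖a‖ = (1 - ‖b‖)⁻¹ * ‖b‖ := by
      have := congrArg norm h
      rwa [norm_smul, norm_smul, Real.norm_eq_abs, Real.norm_eq_abs,
        abs_of_nonneg (inv_nonneg.2 h1a.le), abs_of_nonneg (inv_nonneg.2 h1b.le)] at this
    have hab : ‖a‖ = ‖b‖ := by
      rw [inv_mul_eq_div, inv_mul_eq_div, div_eq_div_iff h1a.ne' h1b.ne'] at hn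
      nlinarith
    rw [hab] at h
    exact smul_right_injective (Eu n) (inv_ne_zero h1b.ne') h
  have hmemball : ∀ q : Eu n, q ∈ closedBall (0:Eu n) 1 → ‖q‖ ≤ 1 := by
    intro q hq; rwa [mem_closedBall_zero_iff] at hq
  -- Ψ on the open ball
  have hΨG : ∀ q : Eu n, ‖q‖ < 1 → Ψ q = G ((1 - ‖q‖)⁻¹ • q) := by
    intro q hq
    rw [hΨlt q hq]
    exact hgradF _
  -- part 1 : continuity
  have hcont : ContinuousOn Ψ (closedBall (0 : Eu n) 1) := by
    intro q hq
    rcases lt_or_eq_of_le (hmemball q hq) with hlt | hq1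
    · -- interior point
      have hball : q ∈ ball (0:Eu n) 1 := mem_ball_zero_iff.2 hlt
      have hρ : ContinuousAt (fun r : Eu n => (1 - ‖r‖)⁻¹ • r) q := by
        have h2 : ContinuousAt (fun r : Eu n => (1 - ‖r‖)⁻¹) q := by
          exact (continuousAt_const.sub continuous_norm.continuousAt).inv₀
            (ne_of_gt (by linarith : (0:ℝ) < 1 - ‖q‖))
        exact h2.smul continuousAt_id
      have hGρ : ContinuousAt (fun r : Eu n => G ((1 - ‖r‖)⁻¹ • r)) q :=
        (hGcont.continuousAt).comp hρ
      have hev : (fun r : Eu n => G ((1 - ‖r‖)⁻¹ • r)) =ᶠ[𝓝 q] Ψ := by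
        filter_upwards [isOpen_ball.mem_nhds hball] with r hr
        exact (hΨG r (mem_ball_zero_iff.1 hr)).symm
      have htend : Tendsto Ψ (𝓝 q) (𝓝 (G ((1 - ‖q‖)⁻¹ • q))) :=
        hGρ.tendsto.congr' hev
      have : ContinuousAt Ψ q := by
        rw [ContinuousAt, hΨG q hlt]; exact htend
      exact this.continuousWithinAt
    · -- boundary point
      have hqne : q ≠ 0 := fun h => by rw [h] at hq1; simp at hq1
      set h : Eu n → ℝ := fun r => if ‖r‖ < 1 then f' ((1 - ‖r‖)⁻¹ * φ r) else finf
        with hhdef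
      have hΨh : ∀ r ∈ closedBall (0:Eu n) 1, r ≠ 0 → Ψ r = h r • gradient φ r := by
        intro r hr hrne
        rcases lt_or_eq_of_le (hmemball r hr) with hlt | heq
        · rw [hΨG r hlt, hGdef]
          have hpos : (0:ℝ) < (1 - ‖r‖)⁻¹ := by
            apply inv_pos.2; linarith
          simp only
          rw [hφ.2.2 _ hpos.le, hΦhom _ hpos r hrne]
          have hval : h r = f' ((1 - ‖r‖)⁻¹ * φ r) := if_pos hlt
          rw [hval]
        · have hval : h r = finf := if_neg (by rw [heq]; exact lt_irrefl (1:ℝ))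
          rw [hΨeq r heq, hval]
      have htendh : Tendsto h (𝓝[closedBall (0:Eu n) 1] q) (𝓝 finf) := by
        rw [Metric.tendsto_nhds]
        intro ε hε
        obtain ⟨T, hT⟩ := (Metric.tendsto_nhds.mp hfinf ε hε).exists_forall_of_atTop
        set T' := max T 1 with hT'def
        have hT'pos : (0:ℝ) < T' := lt_of_lt_of_le one_pos (le_max_right _ _)
        have hη : (0:ℝ) < min (c/(2*T')) (1/2) := by positivity
        have hopen : IsOpen {r : Eu n | 1 - min (c/(2*T')) (1/2) < ‖r‖} :=
          isOpen_lt continuous_const continuous_norm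
        have hqmem : q ∈ {r : Eu n | 1 - min (c/(2*T')) (1/2) < ‖r‖} := by
          show 1 - min (c/(2*T')) (1/2) < ‖q‖
          rw [hq1]; linarith
        filter_upwards [mem_nhdsWithin_of_mem_nhds (hopen.mem_nhds hqmem),
          self_mem_nhdsWithin] with r hr hrball
        have hr' : 1 - min (c/(2*T')) (1/2) < ‖r‖ := hr
        by_cases hrlt : ‖r‖ < 1
        · have hval : h r = f' ((1 - ‖r‖)⁻¹ * φ r) := if_pos hrlt
          rw [hval]
          apply hT
          have h1 : (0:ℝ) < 1 - ‖r‖ := by linarith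
          have h2 : 1 - ‖r‖ ≤ c/(2*T') := by
            have := min_le_left (c/(2*T')) (1/2 : ℝ); linarith
          have h3 : (1/2 : ℝ) ≤ ‖r‖ := by
            have := min_le_right (c/(2*T')) (1/2 : ℝ); linarith
          have h4 : c * ‖r‖ ≤ φ r := hcoer r
          have h5 : T' ≤ (1 - ‖r‖)⁻¹ * φ r := by
            have hφr : c/2 ≤ φ r := by nlinarith
            have hc2T : (0:ℝ) < c/(2*T') := by positivity
            have hinv : (c/(2*T'))⁻¹ ≤ (1 - ‖r‖)⁻¹ := by
              apply inv_anti₀ h1 h2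
            calc T' = (c/(2*T'))⁻¹ * (c/2) := by
                  rw [inv_div]; field_simp
              _ ≤ (1 - ‖r‖)⁻¹ * (c/2) :=
                  mul_le_mul_of_nonneg_right hinv (by positivity)
              _ ≤ (1 - ‖r‖)⁻¹ * φ r :=
                  mul_le_mul_of_nonneg_left hφr (by positivity)
          calc T ≤ T' := le_max_left _ _
            _ ≤ (1 - ‖r‖)⁻¹ * φ r := h5
        · have hval : h r = finf := if_neg hrlt
          rw [hval]
          simpa using hε
      have htendΦ : Tendsto (gradient φ) (𝓝[closedBall (0:Eu n) 1] q)
          (𝓝 (gradient φ q)) :=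
        ((hΦcont.continuousAt (isOpen_compl_singleton.mem_nhds hqne)).tendsto).mono_left
          nhdsWithin_le_nhds
      have htendsmul : Tendsto (fun r => h r • gradient φ r)
          (𝓝[closedBall (0:Eu n) 1] q) (𝓝 (finf • gradient φ q)) :=
        htendh.smul htendΦ
      have hev : (fun r => h r • gradient φ r) =ᶠ[𝓝[closedBall (0:Eu n) 1] q] Ψ := by
        have hne0 : ∀ᶠ r in 𝓝[closedBall (0:Eu n) 1] q, r ≠ 0 := by
          apply eventually_nhdsWithin_of_eventually_nhds
          exact (isOpen_compl_singleton.eventually_mem hqne)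
        filter_upwards [self_mem_nhdsWithin, hne0] with r hr hrne
        exact (hΨh r hr hrne).symm
      rw [ContinuousWithinAt, hΨeq q hq1]
      exact htendsmul.congr' hev
  -- part 2 : injectivity
  have hmix : ∀ a b : Eu n, ‖a‖ < 1 → ‖b‖ = 1 → Ψ a ≠ Ψ b := by
    intro a b ha hb heq
    have hbne : b ≠ 0 := fun h => by rw [h] at hb; simp at hb
    have hφb : 0 < φ b := hφpos b hbne
    rw [hΨG a ha, hΨeq b hb] at heq
    rcases eq_or_ne a 0 with rfl | hane
    · have : G ((1 - ‖(0:Eu n)‖)⁻¹ • (0:Eu n)) = 0 := by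
        rw [smul_zero, hG0]
      rw [this] at heq
      have h1 : (0:ℝ) = ⟪finf • gradient φ b, b⟫ := by rw [← heq]; simp
      rw [inner_smul_left] at h1
      simp only [RCLike.conj_to_real] at h1
      rw [hΦeuler b hbne] at h1
      nlinarith
    · set p := (1 - ‖a‖)⁻¹ • a with hpdef
      have hppos : (0:ℝ) < (1 - ‖a‖)⁻¹ := by
        apply inv_pos.2; linarith
      have hpne : p ≠ 0 := smul_ne_zero hppos.ne' hane
      have h1 : ⟪G p, b⟫ = finf * φ b := by
        rw [heq, inner_smul_left]
        simp only [RCLike.conj_to_real]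
        rw [hΦeuler b hbne]
      have h2 : ⟪G p, b⟫ ≤ f' (φ p) * φ b := by
        rw [hGdef]
        simp only
        rw [inner_smul_left]
        simp only [RCLike.conj_to_real]
        exact mul_le_mul_of_nonneg_left (hΦsub p hpne b) (hf'nn _ (hφnn' p))
      have h3 : f' (φ p) * φ b < finf * φ b :=
        mul_lt_mul_of_pos_right (hf'lt _ (hφnn' p)) hφb
      rw [h1] at h2
      exact absurd (lt_of_le_of_lt h2 h3) (lt_irrefl _)
  have hinj : Set.InjOn Ψ (closedBall (0 : Eu n) 1) := by
    intro q1 h1 q2 h2 heq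
    rcases lt_or_eq_of_le (hmemball q1 h1) with hlt1 | heq1
    · rcases lt_or_eq_of_le (hmemball q2 h2) with hlt2 | heq2
      · rw [hΨG q1 hlt1, hΨG q2 hlt2] at heq
        exact hρinj q1 q2 hlt1 hlt2 (hGinj heq)
      · exact absurd heq (hmix q1 q2 hlt1 heq2)
    · rcases lt_or_eq_of_le (hmemball q2 h2) with hlt2 | heq2
      · exact absurd heq.symm (hmix q2 q1 hlt2 heq1)
      · -- both on the boundary
        have hb1 : ‖q1‖ = 1 := heq1
        have hb2 : ‖q2‖ = 1 := heq2
        have hne1 : q1 ≠ 0 := fun h => by rw [h] at hb1; simp at hb1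
        have hne2 : q2 ≠ 0 := fun h => by rw [h] at hb2; simp at hb2
        rw [hΨeq q1 hb1, hΨeq q2 hb2] at heq
        have hΦeq : gradient φ q1 = gradient φ q2 :=
          smul_right_injective (Eu n) hfinfpos.ne' heq
        have hkey : φ (q1 + q2) = φ q1 + φ q2 := by
          refine le_antisymm (aniso_subadd φ hφ q1 q2) ?_
          have h1 : ⟪gradient φ q1, q1 + q2⟫ ≤ φ (q1 + q2) := hΦsub q1 hne1 _
          rw [inner_add_right, hΦeuler q1 hne1, hΦeq, hΦeuler q2 hne2] at h1
          exact h1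
        rcases hres q1 q2 hkey with h0 | ⟨t, ht0, hteq⟩
        · exact absurd h0 hne1
        · have hnorm : ‖q2‖ = t * ‖q1‖ := by
            rw [hteq, norm_smul, Real.norm_eq_abs, abs_of_nonneg ht0]
          rw [hb1, hb2, mul_one] at hnorm
          rw [hteq, ← hnorm, one_smul]
    -- homeomorphism
  refine ⟨hcont, hinj, ?_⟩
  haveI : CompactSpace (closedBall (0 : Eu n) 1) :=
    isCompact_iff_compactSpace.mp (isCompact_closedBall _ _)
  set e0 : (closedBall (0 : Eu n) 1) ≃ (Ψ '' closedBall (0 : Eu n) 1) :=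
    Equiv.Set.imageOfInjOn Ψ _ hinj with he0def
  have hce : Continuous e0 := by
    apply Continuous.subtype_mk
    exact hcont.restrict
  exact ⟨hce.homeoOfEquivCompactToT2, fun q => rfl⟩

end
end
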